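/- arXiv:1902.09287 — 2 statements merged into one kernel-verified Lean document; each statement's English description precedes it below -/
import Mathlib

section
/- The best rank-r approximation property underlying POD: for a matrix Y ∈ ℝ^{N×m} with singular value decomposition Y = UΣVᵀ and singular values σ₁ ≥ σ₂ ≥ …, the orthonormal set consisting of the first r left singular vectors φ₁,…,φ_r minimizes Σ_{j=1}^m ‖y_j − Σ_{i=1}^r ⟨y_j, φ_i⟩φ_i‖² over all orthonormal families of size r, and the minimal value equals Σ_{i>r} σ_i². -/
/-!
If the rows of `Ψ` are orthonormal, `P = Ψᵀ Ψ` is an orthogonal projection, so the error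
`‖Y - P Y‖²` equals `tr (Y Yᵀ) - tr (Ψ Y Yᵀ Ψᵀ)`. The SVD gives `Y Yᵀ = U D Uᵀ` with
`D = diag (λ_k)`, `λ_k = σ_k²` for `k < m` and `0` otherwise, so with `C = Ψ U` the captured
energy is `∑ λ_k t_k` where `t_k = (Cᵀ C)_kk`. Now `Cᵀ C` is again an orthogonal projection of
rank `r`, hence `0 ≤ t_k ≤ 1` and `∑ t_k = r`; for nonincreasing `λ` such a weighted sum is at
most `λ_0 + ⋯ + λ_{r-1}`, and the first `r` columns of `U` give exactly `t_k = [k < r]`.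
-/

open Finset Matrix

section Projection

variable {R ι κ μ : Type*} [CommRing R] [Fintype ι] [Fintype κ] [Fintype μ]

omit [Fintype ι] in
theorem of_mul_transpose_eq_one_iff [DecidableEq ι] (ψ : ι → κ → R) :
    of ψ * (of ψ)ᵀ = 1 ↔ ∀ i i', ∑ n, ψ i n * ψ i' n = if i = i' then 1 else 0 := by
  simp only [← Matrix.ext_iff, mul_apply, transpose_apply, of_apply, one_apply]

theorem isIdempotentElem_transpose_mul_self [DecidableEq ι] {C : Matrix ι κ R}
    (hC : C * Cᵀ = 1) : IsIdempotentElem (Cᵀ * C) := by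
  rw [IsIdempotentElem, Matrix.mul_assoc, ← Matrix.mul_assoc C, hC, Matrix.one_mul]

theorem trace_transpose_mul_self_eq_card [DecidableEq ι] {C : Matrix ι κ R}
    (hC : C * Cᵀ = 1) : ∑ k, (Cᵀ * C) k k = Fintype.card ι := by
  change trace (Cᵀ * C) = _
  rw [trace_mul_comm, hC, trace_one]

omit [Fintype ι] in
theorem mul_mul_transpose_eq_one [DecidableEq ι] [DecidableEq κ] {Ψ : Matrix ι κ R}
    {U : Matrix κ κ R} (hΨ : Ψ * Ψᵀ = 1) (hU : U * Uᵀ = 1) : Ψ * U * (Ψ * U)ᵀ = 1 := by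
  rw [transpose_mul, Matrix.mul_assoc, ← Matrix.mul_assoc U, hU, Matrix.one_mul, hΨ]

theorem trace_mul_transpose_self (A : Matrix κ μ R) :
    trace (A * Aᵀ) = ∑ j, ∑ n, A n j ^ 2 := by
  simp only [trace, diag_apply, mul_apply, transpose_apply, sq]
  exact Finset.sum_comm

theorem trace_mul_diagonal_mul_transpose [DecidableEq κ] (C : Matrix ι κ R) (d : κ → R) :
    trace (C * diagonal d * Cᵀ) = ∑ k, d k * (Cᵀ * C) k k := by
  rw [trace_mul_comm, ← Matrix.mul_assoc, trace_mul_comm]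
  simp only [trace, diag_apply, diagonal_mul]

theorem trace_sub_mul_mul_transpose {P : Matrix κ κ R} (hP : IsIdempotentElem P) (hPt : Pᵀ = P)
    (Y : Matrix κ μ R) :
    trace ((Y - P * Y) * (Y - P * Y)ᵀ) = trace (Y * Yᵀ) - trace (P * (Y * Yᵀ)) := by
  have hcyc : trace (P * Y * Yᵀ * P) = trace (P * (Y * Yᵀ)) := by
    rw [trace_mul_comm, ← Matrix.mul_assoc, ← Matrix.mul_assoc, hP.eq, Matrix.mul_assoc]
  have hswap : trace (Y * Yᵀ * P) = trace (P * (Y * Yᵀ)) := trace_mul_comm _ _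
  rw [transpose_sub, transpose_mul, hPt, Matrix.sub_mul, Matrix.mul_sub, Matrix.mul_sub,
    trace_sub, trace_sub, trace_sub, ← Matrix.mul_assoc, ← Matrix.mul_assoc, hcyc, hswap,
    Matrix.mul_assoc]
  ring

theorem sum_sq_sub_proj_eq [DecidableEq ι] (ψ : ι → κ → R) (hψ : of ψ * (of ψ)ᵀ = 1)
    (Y : Matrix κ μ R) :
    ∑ j, ∑ n, (Y n j - ∑ i, (∑ p, Y p j * ψ i p) * ψ i n) ^ 2
      = trace (Y * Yᵀ) - trace (of ψ * (Y * Yᵀ) * (of ψ)ᵀ) := by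
  set E := Y - (of ψ)ᵀ * of ψ * Y
  have hE : ∀ n j, E n j = Y n j - ∑ i, (∑ p, Y p j * ψ i p) * ψ i n := by
    intro n j
    simp only [E, Matrix.mul_assoc, Matrix.sub_apply, mul_apply, transpose_apply, of_apply,
      Finset.mul_sum, Finset.sum_mul]
    exact congrArg _ (Finset.sum_congr rfl fun i _ => Finset.sum_congr rfl fun p _ => by ring)
  calc ∑ j, ∑ n, (Y n j - ∑ i, (∑ p, Y p j * ψ i p) * ψ i n) ^ 2
      = trace (E * Eᵀ) := by simp only [trace_mul_transpose_self, hE]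
    _ = trace (Y * Yᵀ) - trace (of ψ * (Y * Yᵀ) * (of ψ)ᵀ) := by
      rw [trace_sub_mul_mul_transpose (isIdempotentElem_transpose_mul_self hψ) (by simp),
        Matrix.mul_assoc, trace_mul_comm (of ψ)ᵀ, Matrix.mul_assoc]

theorem sum_sq_sub_proj_eq_of_mul_transpose_eq [DecidableEq ι] [DecidableEq κ]
    (ψ : ι → κ → R) (hψ : of ψ * (of ψ)ᵀ = 1) {Y : Matrix κ μ R} {U : Matrix κ κ R}
    (hU : Uᵀ * U = 1) {d : κ → R} (hY : Y * Yᵀ = U * diagonal d * Uᵀ) :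
    ∑ j, ∑ n, (Y n j - ∑ i, (∑ p, Y p j * ψ i p) * ψ i n) ^ 2
      = ∑ k, d k - ∑ k, d k * ((of ψ * U)ᵀ * (of ψ * U)) k k := by
  have hassoc : of ψ * (U * diagonal d * Uᵀ) * (of ψ)ᵀ = of ψ * U * diagonal d * (of ψ * U)ᵀ := by
    simp only [transpose_mul, Matrix.mul_assoc]
  rw [sum_sq_sub_proj_eq ψ hψ, hY, hassoc, trace_mul_diagonal_mul_transpose,
    trace_mul_diagonal_mul_transpose, hU]
  simp only [one_apply_eq, mul_one]

end Projection

theorem diag_mem_Icc_of_isIdempotentElem {R κ : Type*} [CommRing R] [LinearOrder R]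
    [IsStrictOrderedRing R] [Fintype κ] {P : Matrix κ κ R} (hP : IsIdempotentElem P)
    (hPt : Pᵀ = P) (k : κ) : 0 ≤ P k k ∧ P k k ≤ 1 := by
  have hsq : P k k = ∑ l, P k l ^ 2 := by
    conv_lhs => rw [← hP.eq]
    simp only [mul_apply, sq]
    exact Finset.sum_congr rfl fun l _ => by rw [← transpose_apply P l k, hPt]
  have hnonneg : 0 ≤ P k k := hsq ▸ Finset.sum_nonneg fun l _ => sq_nonneg _
  have hle : P k k ^ 2 ≤ P k k :=
    hsq ▸ Finset.single_le_sum (f := fun l => P k l ^ 2) (fun l _ => sq_nonneg _) (mem_univ k)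
  exact ⟨hnonneg, by nlinarith⟩

theorem sum_fin_ite_lt_eq_sum_range {M : Type*} [AddCommMonoid M] {n r : ℕ} (hr : r ≤ n)
    (f : ℕ → M) : ∑ k : Fin n, (if (k : ℕ) < r then f k else 0) = ∑ x ∈ range r, f x := by
  rw [Fin.sum_univ_eq_sum_range (fun x => if x < r then f x else 0), ← Finset.sum_filter]
  congr 1
  ext x
  simp only [mem_filter, mem_range]
  omega

theorem sum_fin_ite_lt_sub_sum_range {M : Type*} [AddCommGroup M] {N r : ℕ} (hr : r ≤ N)
    (m : ℕ) (g : ℕ → M) :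
    ∑ k : Fin N, (if (k : ℕ) < m then g k else 0) - ∑ x ∈ range r, (if x < m then g x else 0)
      = ∑ x ∈ Ico r (min N m), g x := by
  rw [Fin.sum_univ_eq_sum_range (fun x => if x < m then g x else 0),
    ← sum_range_add_sum_Ico _ hr, add_sub_cancel_left, ← sum_filter]
  congr 1
  ext x
  simp only [mem_filter, mem_Ico, lt_min_iff]
  omega

theorem sum_mul_le_sum_range_of_antitone {R : Type*} [CommRing R] [LinearOrder R]
    [IsStrictOrderedRing R] {n r : ℕ} (hr : r ≤ n) {f : ℕ → R} (hf : Antitone f)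
    {t : Fin n → R} (ht0 : ∀ k, 0 ≤ t k) (ht1 : ∀ k, t k ≤ 1) (hsum : ∑ k, t k = r) :
    ∑ k : Fin n, f k * t k ≤ ∑ x ∈ range r, f x := by
  -- `f r` serves as a pivot: termwise, `(f k - f r) (t k - 1 [k < r]) ≤ 0`.
  have hpoint : ∀ k : Fin n,
      f k * t k ≤ f r * t k + if (k : ℕ) < r then f k - f r else 0 := by
    intro k
    split_ifs with hk
    · nlinarith [hf hk.le, ht1 k]
    · nlinarith [hf (not_lt.mp hk), ht0 k]
  calc ∑ k : Fin n, f k * t k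
      ≤ ∑ k : Fin n, (f r * t k + if (k : ℕ) < r then f k - f r else 0) :=
        Finset.sum_le_sum fun k _ => hpoint k
    _ = ∑ x ∈ range r, f x := by
      rw [Finset.sum_add_distrib, ← Finset.mul_sum, hsum,
        sum_fin_ite_lt_eq_sum_range hr (fun x => f x - f r), Finset.sum_sub_distrib, sum_const,
        card_range, nsmul_eq_mul]
      ring

theorem antitone_ite_lt_sq {R : Type*} [CommRing R] [LinearOrder R] [IsStrictOrderedRing R]
    {σ : ℕ → R} (hσ : Antitone σ) (hσ0 : ∀ i, 0 ≤ σ i) (m : ℕ) :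
    Antitone fun x => if x < m then σ x ^ 2 else 0 := by
  intro i j hij
  dsimp only
  split_ifs with hj hi hi
  · exact pow_le_pow_left₀ (hσ0 j) (hσ hij) 2
  · omega
  · positivity
  · rfl

theorem rectDiagonal_mul_transpose {R : Type*} [CommRing R] {N m : ℕ} (σ : ℕ → R) :
    (of fun (i : Fin N) (j : Fin m) => if (i : ℕ) = (j : ℕ) then σ i else 0) *
      (of fun (i : Fin N) (j : Fin m) => if (i : ℕ) = (j : ℕ) then σ i else 0)ᵀ
      = diagonal fun k : Fin N => if (k : ℕ) < m then σ k ^ 2 else 0 := by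
  ext k k'
  simp only [mul_apply, transpose_apply, of_apply, diagonal_apply]
  by_cases hk : (k : ℕ) < m
  · rw [Finset.sum_eq_single ⟨k, hk⟩
      (fun j _ hj => by rw [if_neg fun h => hj (Fin.ext h.symm), zero_mul]) (by simp)]
    by_cases hkk' : k = k'
    · subst hkk'
      simp [hk, sq]
    · simp [hkk', (Fin.val_ne_of_ne hkk').symm]
  · refine (Finset.sum_eq_zero fun j _ => ?_).trans (by simp [hk])
    rw [if_neg fun (h : (k : ℕ) = j) => hk (h ▸ j.isLt), zero_mul]

theorem mul_transpose_eq_of_eq_mul_rectDiagonal_mul {R : Type*} [CommRing R] {N m : ℕ}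
    {Y : Matrix (Fin N) (Fin m) R} {U : Matrix (Fin N) (Fin N) R} {V : Matrix (Fin m) (Fin m) R}
    {σ : ℕ → R} (hV : Vᵀ * V = 1)
    (hY : Y = U * (of fun (i : Fin N) (j : Fin m) => if (i : ℕ) = (j : ℕ) then σ i else 0) * Vᵀ) :
    Y * Yᵀ = U * diagonal (fun k : Fin N => if (k : ℕ) < m then σ k ^ 2 else 0) * Uᵀ := by
  rw [hY, transpose_mul, transpose_mul, transpose_transpose, Matrix.mul_assoc,
    Matrix.mul_assoc, ← Matrix.mul_assoc Vᵀ, hV, Matrix.one_mul, ← Matrix.mul_assoc _ _ Uᵀ,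
    ← Matrix.mul_assoc, rectDiagonal_mul_transpose]

section LeadingColumns

variable {R : Type*} [CommRing R] {N r : ℕ} {U : Matrix (Fin N) (Fin N) R}

theorem of_castLE_mul_eq (hrN : r ≤ N) (hU : Uᵀ * U = 1) :
    of (fun i n => U n (Fin.castLE hrN i)) * U
      = (1 : Matrix (Fin N) (Fin N) R).submatrix (Fin.castLE hrN) id := by
  rw [← hU, submatrix_mul Uᵀ U _ id id Function.bijective_id, submatrix_id_id]
  rfl

theorem of_castLE_mul_transpose (hrN : r ≤ N) (hU : Uᵀ * U = 1) :
    of (fun i n => U n (Fin.castLE hrN i)) * (of fun i n => U n (Fin.castLE hrN i))ᵀ = 1 := by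
  change Uᵀ.submatrix (Fin.castLE hrN) id * (Uᵀ.submatrix (Fin.castLE hrN) id)ᵀ = 1
  rw [transpose_submatrix, transpose_transpose, ← submatrix_mul _ _ _ _ _ Function.bijective_id,
    hU]
  exact submatrix_one_embedding (Fin.castLEEmb hrN)

theorem of_castLE_mul_diag (hrN : r ≤ N) (hU : Uᵀ * U = 1) (k : Fin N) :
    ((of (fun i n => U n (Fin.castLE hrN i)) * U)ᵀ * (of (fun i n => U n (Fin.castLE hrN i)) * U))
      k k = if (k : ℕ) < r then 1 else 0 := by
  have hsq : ∀ i : Fin r, (1 : Matrix (Fin N) (Fin N) R).submatrix (Fin.castLE hrN) id i k ^ 2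
      = if (i : ℕ) = k then 1 else 0 := by
    intro i
    simp [one_apply, Fin.ext_iff]
  rw [of_castLE_mul_eq hrN hU, mul_apply]
  simp only [transpose_apply, ← sq, hsq]
  rw [Fin.sum_univ_eq_sum_range (fun x => if x = (k : ℕ) then (1 : R) else 0) r, sum_ite_eq']
  simp only [mem_range]

end LeadingColumns

theorem pod_best_rank_r_general (N m r : ℕ) (hrN : r ≤ N)
    (Y : Matrix (Fin N) (Fin m) ℝ)
    (U : Matrix (Fin N) (Fin N) ℝ) (V : Matrix (Fin m) (Fin m) ℝ)
    (σ : ℕ → ℝ)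
    (hU : Uᵀ * U = 1) (hV : Vᵀ * V = 1)
    (hσ : ∀ i j : ℕ, i ≤ j → σ j ≤ σ i) (hσ0 : ∀ i, 0 ≤ σ i)
    (hSVD : Y = U * (Matrix.of fun (i : Fin N) (j : Fin m) =>
      if (i : ℕ) = (j : ℕ) then σ i else 0) * Vᵀ) :
    let projError : (Fin r → Fin N → ℝ) → ℝ := fun ψ =>
      ∑ j : Fin m, ∑ n : Fin N,
        (Y n j - ∑ i : Fin r, (∑ p : Fin N, Y p j * ψ i p) * ψ i n) ^ 2
    let orthonormal : (Fin r → Fin N → ℝ) → Prop := fun ψ =>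
      ∀ i i' : Fin r, ∑ n : Fin N, ψ i n * ψ i' n = if i = i' then 1 else 0
    let φ : Fin r → Fin N → ℝ := fun i n => U n (Fin.castLE hrN i)
    orthonormal φ ∧
      projError φ = ∑ i ∈ Finset.Ico r (min N m), σ i ^ 2 ∧
      ∀ ψ, orthonormal ψ → projError φ ≤ projError ψ := by
  intro projError orthonormal φ
  set Λ : ℕ → ℝ := fun x => if x < m then σ x ^ 2 else 0
  have herr : ∀ ψ, orthonormal ψ →
      projError ψ = ∑ k : Fin N, Λ k - ∑ k : Fin N, Λ k * ((of ψ * U)ᵀ * (of ψ * U)) k k :=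
    fun ψ hψ => sum_sq_sub_proj_eq_of_mul_transpose_eq ψ ((of_mul_transpose_eq_one_iff ψ).2 hψ)
      hU (mul_transpose_eq_of_eq_mul_rectDiagonal_mul hV hSVD)
  have hφ : orthonormal φ := (of_mul_transpose_eq_one_iff φ).1 (of_castLE_mul_transpose hrN hU)
  have hφerr : projError φ = ∑ k : Fin N, Λ k - ∑ x ∈ range r, Λ x := by
    rw [herr φ hφ, ← sum_fin_ite_lt_eq_sum_range hrN Λ]
    simp only [φ, of_castLE_mul_diag hrN hU, mul_ite, mul_one, mul_zero]
  refine ⟨hφ, hφerr.trans (sum_fin_ite_lt_sub_sum_range hrN m (σ · ^ 2)), fun ψ hψ => ?_⟩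
  have hC := mul_mul_transpose_eq_one ((of_mul_transpose_eq_one_iff ψ).2 hψ)
    (mul_eq_one_comm.mp hU)
  have hdiag := diag_mem_Icc_of_isIdempotentElem (isIdempotentElem_transpose_mul_self hC)
    (by simp)
  rw [hφerr, herr ψ hψ, sub_le_sub_iff_left]
  exact sum_mul_le_sum_range_of_antitone hrN (antitone_ite_lt_sq hσ hσ0 m)
    (fun k => (hdiag k).1) (fun k => (hdiag k).2)
    (by simpa using trace_transpose_mul_self_eq_card hC)

/-- Eckart–Young / POD: for `Y = U Σ Vᵀ` with orthogonal `U, V` and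
nonincreasing nonnegative singular values `σ`, the first `r` left singular
vectors minimize the projection error over all orthonormal families of size
`r`, and the minimal value is `Σ_{i > r} σ_i²`. -/
theorem pod_best_rank_r (N m r : ℕ) (hrN : r ≤ N) (hrm : r ≤ m)
    (Y : Matrix (Fin N) (Fin m) ℝ)
    (U : Matrix (Fin N) (Fin N) ℝ) (V : Matrix (Fin m) (Fin m) ℝ)
    (σ : ℕ → ℝ)
    (hU : Uᵀ * U = 1) (hV : Vᵀ * V = 1)
    (hσ : ∀ i j : ℕ, i ≤ j → σ j ≤ σ i) (hσ0 : ∀ i, 0 ≤ σ i)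
    (hSVD : Y = U * (Matrix.of fun (i : Fin N) (j : Fin m) =>
      if (i : ℕ) = (j : ℕ) then σ i else 0) * Vᵀ) :
    let projError : (Fin r → Fin N → ℝ) → ℝ := fun ψ =>
      ∑ j : Fin m, ∑ n : Fin N,
        (Y n j - ∑ i : Fin r, (∑ p : Fin N, Y p j * ψ i p) * ψ i n) ^ 2
    let orthonormal : (Fin r → Fin N → ℝ) → Prop := fun ψ =>
      ∀ i i' : Fin r, ∑ n : Fin N, ψ i n * ψ i' n = if i = i' then 1 else 0
    let φ : Fin r → Fin N → ℝ := fun i n => U n (Fin.castLE hrN i)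
    orthonormal φ ∧
      projError φ = ∑ i ∈ Finset.Ico r (min N m), σ i ^ 2 ∧
      ∀ ψ, orthonormal ψ → projError φ ≤ projError ψ :=
  pod_best_rank_r_general N m r hrN Y U V σ hU hV hσ hσ0 hSVD
end

section
/- If λ is a nonzero eigenvalue of the reduced matrix = UᵀY'VΣ⁻¹ with eigenvector w (Âw = λw), where Y = UΣVᵀ is a reduced SVD with UᵀU = I and VᵀV = I and Σ invertible, then ψ = Y'VΣ⁻¹w is an eigenvector of A = Y'Y† with the same eigenvalue λ, provided ψ ≠ 0. -/
open Matrix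

theorem Matrix.mul_mulVec_eq_smul_of_mul_swap_mulVec_eq_smul {R l n : Type*} [CommSemiring R]
    [Fintype l] [Fintype n] (P : Matrix l n R) (Q : Matrix n l R) {c : R} {w : n → R}
    (hw : (Q * P) *ᵥ w = c • w) : (P * Q) *ᵥ (P *ᵥ w) = c • (P *ᵥ w) := by
  rw [mulVec_mulVec, Matrix.mul_assoc, ← mulVec_mulVec, hw, mulVec_smul]

theorem dmd_modes_are_eigenvectors_general (N m r : ℕ)
    (Y' : Matrix (Fin N) (Fin m) ℝ)
    (U : Matrix (Fin N) (Fin r) ℝ) (V : Matrix (Fin m) (Fin r) ℝ)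
    (S : Matrix (Fin r) (Fin r) ℝ)
    (lam : ℝ) (w : Fin r → ℝ)
    (hw : (Uᵀ * Y' * V * S⁻¹).mulVec w = lam • w)
    (ψ : Fin N → ℝ) (hψ : ψ = (Y' * V * S⁻¹).mulVec w) :
    (Y' * (V * S⁻¹ * Uᵀ)).mulVec ψ = lam • ψ := by
  have hA : Y' * (V * S⁻¹ * Uᵀ) = (Y' * V * S⁻¹) * Uᵀ := by simp only [Matrix.mul_assoc]
  have hÂ : Uᵀ * Y' * V * S⁻¹ = Uᵀ * (Y' * V * S⁻¹) := by simp only [Matrix.mul_assoc]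
  rw [hÂ] at hw
  rw [hψ, hA]
  exact mul_mulVec_eq_smul_of_mul_swap_mulVec_eq_smul _ _ hw

/-- Exact DMD modes are eigenvectors of the full DMD operator: if
`Â w = λ w` with `Â = Uᵀ Y' V Σ⁻¹`, `Y = U Σ Vᵀ` a reduced SVD, then
`ψ = Y' V Σ⁻¹ w` satisfies `A ψ = λ ψ` for `A = Y' Y† = Y' V Σ⁻¹ Uᵀ`. -/
theorem dmd_modes_are_eigenvectors (N m r : ℕ)
    (Y Y' : Matrix (Fin N) (Fin m) ℝ)
    (U : Matrix (Fin N) (Fin r) ℝ) (V : Matrix (Fin m) (Fin r) ℝ)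
    (S : Matrix (Fin r) (Fin r) ℝ)
    (hU : Uᵀ * U = 1) (hV : Vᵀ * V = 1) (hS : IsUnit S.det)
    (hSVD : Y = U * S * Vᵀ)
    (lam : ℝ) (hlam : lam ≠ 0) (w : Fin r → ℝ)
    (hw : (Uᵀ * Y' * V * S⁻¹).mulVec w = lam • w)
    (ψ : Fin N → ℝ) (hψ : ψ = (Y' * V * S⁻¹).mulVec w) (hψ0 : ψ ≠ 0) :
    (Y' * (V * S⁻¹ * Uᵀ)).mulVec ψ = lam • ψ :=
  dmd_modes_are_eigenvectors_general N m r Y' U V S lam w hw ψ hψ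
end
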